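/- Let A : E₁ → E₂ be linear, g : E₂ → R strictly convex (finite-valued), and h : E₁ → R ∪ {+∞} closed proper convex. Then A is constant on the solution set argmin_{x ∈ E₁} { g(A(x)) + h(x) }; i.e. any two minimizers x₁, x₂ satisfy A(x₁) = A(x₂), and consequently h(x₁) = h(x₂). -/

import Mathlib

open Matrix

noncomputable def nuclearNorm {m n : Type*} [Fintype m] [Fintype n] [DecidableEq n]
    (A : Matrix m n ℝ) : ℝ :=
  ((Matrix.posSemidef_conjTranspose_mul_self A).1.eigenvectorUnitary.1 *
    diagonal ((RCLike.ofReal : ℝ → ℝ) ∘ (fun x : ℝ => Real.sqrt x) ∘ (Matrix.posSemidef_conjTranspose_mul_self A).1.eigenvalues) *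
    (star (Matrix.posSemidef_conjTranspose_mul_self A).1.eigenvectorUnitary : Matrix n n ℝ)).trace

noncomputable def opNorm {m n : Type*} [Fintype m] [Fintype n] [DecidableEq m] [DecidableEq n]
    (A : Matrix m n ℝ) : ℝ :=
  ‖(LinearMap.toContinuousLinearMap
      (Matrix.toEuclideanLin A : EuclideanSpace ℝ n →ₗ[ℝ] EuclideanSpace ℝ m))‖

def finner {m n : Type*} [Fintype m] [Fintype n] (A B : Matrix m n ℝ) : ℝ :=
  (Aᵀ * B).trace

noncomputable def nuclearSubdiff {m n : Type*} [Fintype m] [Fintype n] [DecidableEq n]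
    (X : Matrix m n ℝ) : Set (Matrix m n ℝ) :=
  {Y | ∀ Z, nuclearNorm X + finner Y (Z - X) ≤ nuclearNorm Z}

def rectDiag (n p : ℕ) (s : Fin p → ℝ) : Matrix (Fin n) (Fin p) ℝ :=
  Matrix.of fun i j => if (i : ℕ) = (j : ℕ) then s j else 0

def blockIR (n p r : ℕ) (R : Matrix (Fin (n - r)) (Fin (p - r)) ℝ) :
    Matrix (Fin n) (Fin p) ℝ :=
  Matrix.of fun i j =>
    if h : (i : ℕ) < r ∨ (j : ℕ) < r then (if (i : ℕ) = (j : ℕ) then 1 else 0)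
    else R ⟨i - r, by have := i.isLt; omega⟩ ⟨j - r, by have := j.isLt; omega⟩


/-! On its effective domain `h` is a real convex function. At the midpoint of two minimisers,
strict convexity of `g` makes `g ∘ A` fall strictly below the average unless `A x₁ = A x₂`,
while `h` stays below the average, so the objective would beat the optimum. Once `A x₁ = A x₂`,
equality of the optimal values forces `h x₁ = h x₂`. -/

open Set

section StrictConvexComposite

variable {E F : Type*} [AddCommGroup E] [Module ℝ E] [AddCommGroup F] [Module ℝ F]

theorem StrictConvexOn.map_eq_and_eq_of_isMinOn_comp_add {g : F → ℝ}
    (hg : StrictConvexOn ℝ univ g) (A : E →ₗ[ℝ] F) {k : E → ℝ} {s : Set E}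
    (hk : ConvexOn ℝ s k) {x₁ x₂ : E} (hx₁ : x₁ ∈ s) (hx₂ : x₂ ∈ s)
    (h₁ : IsMinOn (fun x => g (A x) + k x) s x₁) (h₂ : IsMinOn (fun x => g (A x) + k x) s x₂) :
    A x₁ = A x₂ ∧ k x₁ = k x₂ := by
  have hval : g (A x₁) + k x₁ = g (A x₂) + k x₂ := le_antisymm (h₁ hx₂) (h₂ hx₁)
  have hA : A x₁ = A x₂ := by
    by_contra hne
    set m : E := (1 / 2 : ℝ) • x₁ + (1 / 2 : ℝ) • x₂
    have hm : m ∈ s := hk.1 hx₁ hx₂ (by norm_num) (by norm_num) (by norm_num)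
    have hgm : g (A m) < 1 / 2 * g (A x₁) + 1 / 2 * g (A x₂) := by
      simpa only [m, map_add, map_smul, smul_eq_mul] using
        hg.2 (mem_univ _) (mem_univ _) hne (by norm_num) (by norm_num) (by norm_num)
    have hkm : k m ≤ 1 / 2 * k x₁ + 1 / 2 * k x₂ := by
      simpa only [smul_eq_mul] using hk.2 hx₁ hx₂ (by norm_num) (by norm_num) (by norm_num)
    have hopt : g (A x₁) + k x₁ ≤ g (A m) + k m := h₁ hm
    linarith
  exact ⟨hA, by rw [hA] at hval; linarith⟩

end StrictConvexComposite

section EpigraphConvex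

variable {E : Type*} [AddCommGroup E] [Module ℝ E] {h : E → EReal}

theorem le_combo_of_convex_epigraph (hconv : Convex ℝ {q : E × ℝ | h q.1 ≤ (q.2 : EReal)})
    {x y : E} {r t : ℝ} (hx : h x ≤ r) (hy : h y ≤ t) {a b : ℝ} (ha : 0 ≤ a) (hb : 0 ≤ b)
    (hab : a + b = 1) : h (a • x + b • y) ≤ ((a * r + b * t : ℝ) : EReal) := by
  simpa only [mem_ofPred_eq, Prod.fst_add, Prod.snd_add, Prod.smul_fst, Prod.smul_snd,
    smul_eq_mul] using hconv (show (x, r) ∈ _ from hx) (show (y, t) ∈ _ from hy) ha hb hab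

theorem convexOn_toReal_of_convex_epigraph (hbot : ∀ x, h x ≠ ⊥)
    (hconv : Convex ℝ {q : E × ℝ | h q.1 ≤ (q.2 : EReal)}) :
    ConvexOn ℝ {x | h x ≠ ⊤} (fun x => (h x).toReal) := by
  have hle : ∀ {x}, h x ≠ ⊤ → h x ≤ (h x).toReal := fun hx => (EReal.coe_toReal hx (hbot _)).ge
  refine ⟨fun x hx y hy a b ha hb hab => ?_, fun x hx y hy a b ha hb hab => ?_⟩
  · exact ne_top_of_le_ne_top (EReal.coe_ne_top _)
      (le_combo_of_convex_epigraph hconv (hle hx) (hle hy) ha hb hab)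
  · exact EReal.toReal_le_toReal (le_combo_of_convex_epigraph hconv (hle hx) (hle hy) ha hb hab)
      (hbot _) (EReal.coe_ne_top _)

end EpigraphConvex

section ERealMinimizer

variable {E : Type*} {f : E → ℝ} {h : E → EReal} {x₁ : E}

theorem ne_top_of_forall_coe_add_le (hproper : ∃ x, h x ≠ ⊤)
    (hmin : ∀ x, (f x₁ : EReal) + h x₁ ≤ f x + h x) : h x₁ ≠ ⊤ := by
  obtain ⟨x₀, hx₀⟩ := hproper
  intro htop
  have := hmin x₀
  rw [htop, EReal.coe_add_top, top_le_iff] at this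
  exact EReal.add_ne_top (EReal.coe_ne_top _) hx₀ this

theorem isMinOn_add_toReal_of_forall_coe_add_le (hbot : ∀ x, h x ≠ ⊥) (hx₁ : h x₁ ≠ ⊤)
    (hmin : ∀ x, (f x₁ : EReal) + h x₁ ≤ f x + h x) :
    IsMinOn (fun x => f x + (h x).toReal) {x | h x ≠ ⊤} x₁ := by
  intro x hx
  have := hmin x
  rw [← EReal.coe_toReal hx₁ (hbot x₁), ← EReal.coe_toReal hx (hbot x)] at this
  exact_mod_cast this

end ERealMinimizer

theorem linear_map_constant_on_argmin_general
    {E₁ E₂ : Type*} [NormedAddCommGroup E₁] [InnerProductSpace ℝ E₁]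
    [NormedAddCommGroup E₂] [InnerProductSpace ℝ E₂]
    (A : E₁ →ₗ[ℝ] E₂) (g : E₂ → ℝ) (hg : StrictConvexOn ℝ Set.univ g)
    (h : E₁ → EReal) (hbot : ∀ x, h x ≠ ⊥) (hproper : ∃ x, h x ≠ ⊤)
    (hconv : Convex ℝ {q : E₁ × ℝ | h q.1 ≤ (q.2 : EReal)})
    (x₁ x₂ : E₁)
    (h₁ : ∀ x, ((g (A x₁) : EReal) + h x₁) ≤ ((g (A x) : EReal) + h x))
    (h₂ : ∀ x, ((g (A x₂) : EReal) + h x₂) ≤ ((g (A x) : EReal) + h x)) :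
    A x₁ = A x₂ ∧ h x₁ = h x₂ := by
  have ht₁ : h x₁ ≠ ⊤ := ne_top_of_forall_coe_add_le (f := g ∘ A) hproper h₁
  have ht₂ : h x₂ ≠ ⊤ := ne_top_of_forall_coe_add_le (f := g ∘ A) hproper h₂
  obtain ⟨hA, hk⟩ := hg.map_eq_and_eq_of_isMinOn_comp_add A
    (convexOn_toReal_of_convex_epigraph hbot hconv) ht₁ ht₂
    (isMinOn_add_toReal_of_forall_coe_add_le hbot ht₁ h₁)
    (isMinOn_add_toReal_of_forall_coe_add_le hbot ht₂ h₂)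
  refine ⟨hA, ?_⟩
  rw [← EReal.coe_toReal ht₁ (hbot x₁), ← EReal.coe_toReal ht₂ (hbot x₂), hk]

theorem linear_map_constant_on_argmin
    {E₁ E₂ : Type*} [NormedAddCommGroup E₁] [InnerProductSpace ℝ E₁] [FiniteDimensional ℝ E₁]
    [NormedAddCommGroup E₂] [InnerProductSpace ℝ E₂] [FiniteDimensional ℝ E₂]
    (A : E₁ →ₗ[ℝ] E₂) (g : E₂ → ℝ) (hg : StrictConvexOn ℝ Set.univ g)
    (h : E₁ → EReal) (hbot : ∀ x, h x ≠ ⊥) (hproper : ∃ x, h x ≠ ⊤)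
    (hconv : Convex ℝ {q : E₁ × ℝ | h q.1 ≤ (q.2 : EReal)})
    (hclosed : IsClosed {q : E₁ × ℝ | h q.1 ≤ (q.2 : EReal)})
    (x₁ x₂ : E₁)
    (h₁ : ∀ x, ((g (A x₁) : EReal) + h x₁) ≤ ((g (A x) : EReal) + h x))
    (h₂ : ∀ x, ((g (A x₂) : EReal) + h x₂) ≤ ((g (A x) : EReal) + h x)) :
    A x₁ = A x₂ ∧ h x₁ = h x₂ :=
  linear_map_constant_on_argmin_general A g hg h hbot hproper hconv x₁ x₂ h₁ h₂
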